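/- If V satisfies the equation KV = V - U exactly (rather than an inequality), and sup V < ∞ and inf U > 0, and the minimal solution V* is finite, then E_x[ V(X_n) Π_{k=1}^n Df_k(X_{k-1}) ] → 0 as n → ∞ for every x. -/

import Mathlib

open MeasureTheory ENNReal Filter

/-- The contractive drift operator `KV(x) = E[Df(x) V(f(x))]`. -/
noncomputable def Kop {X Ω : Type*} [MeasurableSpace Ω] (μ : Measure Ω)
    (f : Ω → X → X) (Df : Ω → X → ℝ≥0∞) : (X → ℝ≥0∞) → X → ℝ≥0∞ :=
  fun V x => ∫⁻ ω, Df ω x * V (f ω x) ∂μ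

lemma Kop_mono {X Ω : Type*} [MeasurableSpace Ω] (μ : Measure Ω)
    (f : Ω → X → X) (Df : Ω → X → ℝ≥0∞) {V W : X → ℝ≥0∞} (h : ∀ y, V y ≤ W y) :
    ∀ x, Kop μ f Df V x ≤ Kop μ f Df W x := fun x =>
  lintegral_mono fun ω => mul_le_mul_right (h _) _

lemma Kop_iter_mono {X Ω : Type*} [MeasurableSpace Ω] (μ : Measure Ω)
    (f : Ω → X → X) (Df : Ω → X → ℝ≥0∞) (n : ℕ) {V W : X → ℝ≥0∞} (h : ∀ y, V y ≤ W y) :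
    ∀ x, (Kop μ f Df)^[n] V x ≤ (Kop μ f Df)^[n] W x := by
  induction n generalizing V W with
  | zero => exact h
  | succ n ih =>
    intro x
    rw [Function.iterate_succ_apply, Function.iterate_succ_apply]
    exact ih (Kop_mono μ f Df h) x

lemma Kop_smul {X Ω : Type*} [MeasurableSpace Ω] (μ : Measure Ω)
    (f : Ω → X → X) (Df : Ω → X → ℝ≥0∞) {c : ℝ≥0∞} (hc : c ≠ ⊤) (W : X → ℝ≥0∞) :
    Kop μ f Df (fun y => c * W y) = fun x => c * Kop μ f Df W x := by
  funext x
  simp only [Kop]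
  rw [← lintegral_const_mul' c _ hc]
  simp only [mul_left_comm]

lemma Kop_iter_smul {X Ω : Type*} [MeasurableSpace Ω] (μ : Measure Ω)
    (f : Ω → X → X) (Df : Ω → X → ℝ≥0∞) (n : ℕ) {c : ℝ≥0∞} (hc : c ≠ ⊤) (W : X → ℝ≥0∞) :
    (Kop μ f Df)^[n] (fun y => c * W y) = fun x => c * (Kop μ f Df)^[n] W x := by
  induction n generalizing W with
  | zero => rfl
  | succ n ih =>
    rw [Function.iterate_succ_apply, Function.iterate_succ_apply,
      Kop_smul μ f Df hc W, ih (Kop μ f Df W)]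

/-- If `V` solves the contractive drift equation `KV + U = V` exactly, `sup V < ∞`,
`inf U > 0`, and the minimal solution `V* = Σ_k K^k U` is finite, then
`E_x[V(X_n) Π_{k=1}^n Df_k(X_{k-1})] = K^n V (x) → 0` as `n → ∞`, for every `x`. -/
theorem stmt4 {X Ω : Type*} [MeasurableSpace Ω] (μ : Measure Ω) [IsProbabilityMeasure μ]
    (f : Ω → X → X) (Df : Ω → X → ℝ≥0∞) (V U : X → ℝ≥0∞)
    (hsol : ∀ x, Kop μ f Df V x + U x = V x)
    (hbdd : ∃ M : ℝ≥0∞, M < ⊤ ∧ ∀ x, V x ≤ M)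
    (hU : ∃ c : ℝ≥0∞, 0 < c ∧ ∀ x, c ≤ U x)
    (hVstar : ∀ x, (∑' k : ℕ, (Kop μ f Df)^[k] U x) < ⊤) :
    ∀ x, Tendsto (fun n : ℕ => (Kop μ f Df)^[n] V x) atTop (nhds 0) := by
  obtain ⟨M, hMtop, hM⟩ := hbdd
  obtain ⟨c, hc0, hcU⟩ := hU
  intro x
  -- replace c by min c 1 so that it is finite
  set c' := min c 1 with hc'
  have hc'0 : c' ≠ 0 := (lt_min hc0 one_pos).ne'
  have hc'top : c' ≠ ⊤ := by
    exact ne_top_of_le_ne_top one_ne_top (min_le_right _ _)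
  have hc'U : ∀ y, c' * (1 : ℝ≥0∞) ≤ U y := fun y => by
    rw [mul_one]; exact le_trans (min_le_left c 1) (hcU y)
  -- K^n 𝟙 x is summable
  have hsum : (∑' k : ℕ, (Kop μ f Df)^[k] (fun _ => (1 : ℝ≥0∞)) x) ≠ ⊤ := by
    by_contra h
    have hle : ∀ k : ℕ, c' * (Kop μ f Df)^[k] (fun _ => (1 : ℝ≥0∞)) x
        ≤ (Kop μ f Df)^[k] U x := by
      intro k
      have := Kop_iter_mono μ f Df k hc'U x
      rwa [Kop_iter_smul μ f Df k hc'top (fun _ => (1 : ℝ≥0∞))] at this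
    have h1 : c' * (∑' k : ℕ, (Kop μ f Df)^[k] (fun _ => (1 : ℝ≥0∞)) x)
        ≤ ∑' k : ℕ, (Kop μ f Df)^[k] U x := by
      rw [← ENNReal.tsum_mul_left]
      exact ENNReal.tsum_le_tsum hle
    rw [h, ENNReal.mul_top hc'0] at h1
    exact absurd (top_le_iff.mp h1) (hVstar x).ne
  have h1tendsto : Tendsto (fun n : ℕ => (Kop μ f Df)^[n] (fun _ => (1 : ℝ≥0∞)) x)
      atTop (nhds 0) := ENNReal.tendsto_atTop_zero_of_tsum_ne_top hsum
  have hMtendsto : Tendsto (fun n : ℕ => M * (Kop μ f Df)^[n] (fun _ => (1 : ℝ≥0∞)) x)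
      atTop (nhds 0) := by
    have := ENNReal.Tendsto.const_mul h1tendsto (Or.inr hMtop.ne)
    simpa using this
  refine tendsto_of_tendsto_of_tendsto_of_le_of_le tendsto_const_nhds hMtendsto
    (fun n => zero_le) (fun n => ?_)
  have hVle : ∀ y, V y ≤ M * (1 : ℝ≥0∞) := fun y => by simpa using hM y
  have := Kop_iter_mono μ f Df n hVle x
  rwa [Kop_iter_smul μ f Df n hMtop.ne (fun _ => (1 : ℝ≥0∞))] at this
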